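/- Assume pq = 1, β = δ = 0, and α = γτ². Let w ∈ ℂ be nonzero with τ + w² − w⁻² − τ⁻¹ ≠ 0, and suppose (1/2)(γτ + ατ⁻¹) = (τ − τ⁻¹)/(τ + w² − w⁻² − τ⁻¹). Define g := −(1/2)(τ − τ⁻¹)/(τ + w² − w⁻² − τ⁻¹) and the Hamiltonian 𝓗 := −(1/4) Σ_{i=1}^{L−1} ( σˣ_i σˣ_{i+1} + σʸ_i σʸ_{i+1} + ((τ+τ⁻¹)/2) σᶻ_i σᶻ_{i+1} ) − ((τ⁻¹−τ)/8)(σᶻ_L − σᶻ₁) − ((L+1)(τ+τ⁻¹)/8)·I + g·( ((τ⁻¹−τ)/2) σᶻ₁ + σˣ₁ ). Then there exists a constant C ∈ ℂ such that 2𝓗 = V 𝓛 V⁻¹ + C·I. -/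
import Mathlib


open Matrix Complex

noncomputable section

/-- A particle configuration on `L` sites: each site is a hole (`0`) or a particle (`1`). -/
abbrev Conf (L : ℕ) := Fin L → Fin 2

/-- The 2×2 matrix `A` acting on the `j`-th tensor factor (0-based index) of `(ℂ²)^{⊗L}`
and the identity elsewhere.  (For `j ≥ L` this is the identity.) -/
def site (L : ℕ) (A : Matrix (Fin 2) (Fin 2) ℂ) (j : ℕ) :
    Matrix (Conf L) (Conf L) ℂ :=
  Matrix.of fun η' η =>
    if h : j < L then
      A (η' ⟨j, h⟩) (η ⟨j, h⟩) *
        ∏ k ∈ Finset.univ.erase (⟨j, h⟩ : Fin L), (if η' k = η k then (1 : ℂ) else 0)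
    else (if η' = η then (1 : ℂ) else 0)

def sigmaPlus : Matrix (Fin 2) (Fin 2) ℂ := !![0, 1; 0, 0]
def sigmaMinus : Matrix (Fin 2) (Fin 2) ℂ := !![0, 0; 1, 0]
def numOp : Matrix (Fin 2) (Fin 2) ℂ := !![0, 0; 0, 1]
def sigmaX : Matrix (Fin 2) (Fin 2) ℂ := !![0, 1; 1, 0]
def sigmaY : Matrix (Fin 2) (Fin 2) ℂ := !![0, -Complex.I; Complex.I, 0]
def sigmaZ : Matrix (Fin 2) (Fin 2) ℂ := !![1, 0; 0, -1]

/-- The open ASEP generator `𝓛` on `L` sites with bulk rates `p` (right), `q` (left),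
left-boundary entry/exit rates `α, γ` and right-boundary entry/exit rates `δ, β`.
Lattice sites are 0-based, so site `1` of the paper is index `0` and site `L` is `L-1`. -/
def asepGen (L : ℕ) (p q α β γ δ : ℝ) : Matrix (Conf L) (Conf L) ℂ :=
  (-((Real.sqrt (p * q) : ℝ) : ℂ)) •
    (∑ j ∈ Finset.range (L - 1),
      (((Real.sqrt (p / q) : ℝ) : ℂ)⁻¹ •
          (site L sigmaMinus j * site L sigmaPlus (j + 1)
            - site L (1 - numOp) j * site L numOp (j + 1))
        + ((Real.sqrt (p / q) : ℝ) : ℂ) •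
          (site L sigmaMinus (j + 1) * site L sigmaPlus j
            - site L numOp j * site L (1 - numOp) (j + 1))))
  - (α : ℂ) • (site L sigmaMinus 0 - 1 + site L numOp 0)
  - (γ : ℂ) • (site L sigmaPlus 0 - site L numOp 0)
  - (δ : ℂ) • (site L sigmaMinus (L - 1) - 1 + site L numOp (L - 1))
  - (β : ℂ) • (site L sigmaPlus (L - 1) - site L numOp (L - 1))

/-- The diagonal matrix `V` acting on a configuration basis vector `e_η` by
`τ^{-Σ_j j η_j}` (with 1-based site labels as in the paper). -/
def Vmat (L : ℕ) (τ : ℂ) : Matrix (Conf L) (Conf L) ℂ :=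
  Matrix.diagonal fun η : Conf L =>
    τ ^ (-(∑ j : Fin L, (((j : ℕ) : ℤ) + 1) * ((η j : ℕ) : ℤ)))

namespace AsepAux

/-! ### Entry lemmas for `site` -/

lemma site_apply {L : ℕ} (A : Matrix (Fin 2) (Fin 2) ℂ) {j : ℕ} (hj : j < L) (η' η : Conf L) :
    site L A j η' η = A (η' ⟨j, hj⟩) (η ⟨j, hj⟩) *
      ∏ k ∈ Finset.univ.erase (⟨j, hj⟩ : Fin L), (if η' k = η k then (1 : ℂ) else 0) := by
  simp only [site, Matrix.of_apply]
  rw [dif_pos hj]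

lemma delta_prod {L : ℕ} (η' η : Conf L) :
    (if η' = η then (1:ℂ) else 0) = ∏ k : Fin L, (if η' k = η k then (1:ℂ) else 0) := by
  by_cases h : η' = η
  · subst h; simp
  · rw [if_neg h]
    obtain ⟨k, hk⟩ : ∃ k, η' k ≠ η k := by
      by_contra hc; push_neg at hc; exact h (funext hc)
    exact (Finset.prod_eq_zero (Finset.mem_univ k)
      (show (if η' k = η k then (1:ℂ) else 0) = 0 from if_neg hk)).symm

lemma site_one {L : ℕ} {j : ℕ} (hj : j < L) :
    site L (1 : Matrix (Fin 2) (Fin 2) ℂ) j = 1 := by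
  ext η' η
  rw [site_apply (1 : Matrix (Fin 2) (Fin 2) ℂ) hj, Matrix.one_apply, Matrix.one_apply,
    delta_prod, ← Finset.mul_prod_erase _ _ (Finset.mem_univ (⟨j, hj⟩ : Fin L))]

lemma site_add {L : ℕ} (A B : Matrix (Fin 2) (Fin 2) ℂ) {j : ℕ} (hj : j < L) :
    site L (A + B) j = site L A j + site L B j := by
  ext η' η
  rw [Matrix.add_apply, site_apply _ hj, site_apply _ hj, site_apply _ hj, Matrix.add_apply]
  ring

lemma site_sub {L : ℕ} (A B : Matrix (Fin 2) (Fin 2) ℂ) {j : ℕ} (hj : j < L) :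
    site L (A - B) j = site L A j - site L B j := by
  ext η' η
  rw [Matrix.sub_apply, site_apply _ hj, site_apply _ hj, site_apply _ hj, Matrix.sub_apply]
  ring

lemma site_smul {L : ℕ} (c : ℂ) (A : Matrix (Fin 2) (Fin 2) ℂ) {j : ℕ} (hj : j < L) :
    site L (c • A) j = c • site L A j := by
  ext η' η
  rw [Matrix.smul_apply, site_apply _ hj, site_apply _ hj, Matrix.smul_apply,
    smul_eq_mul, smul_eq_mul]
  ring

lemma site_mul_site_apply {L : ℕ} (A B : Matrix (Fin 2) (Fin 2) ℂ) {j k : ℕ}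
    (hj : j < L) (hk : k < L) (hjk : j ≠ k) (η' η : Conf L) :
    (site L A j * site L B k) η' η =
      A (η' ⟨j, hj⟩) (η ⟨j, hj⟩) * B (η' ⟨k, hk⟩) (η ⟨k, hk⟩) *
        ∏ l ∈ (Finset.univ.erase (⟨j, hj⟩ : Fin L)).erase ⟨k, hk⟩,
          (if η' l = η l then (1 : ℂ) else 0) := by
  have hfne : (⟨j, hj⟩ : Fin L) ≠ ⟨k, hk⟩ := fun h => hjk (congrArg Fin.val h)
  rw [Matrix.mul_apply]
  rw [Finset.sum_eq_single (Function.update η' (⟨j, hj⟩ : Fin L) (η ⟨j, hj⟩))]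
  · rw [site_apply A hj, site_apply B hk, Function.update_self]
    have h1 : ∏ l ∈ Finset.univ.erase (⟨j,hj⟩ : Fin L),
        (if η' l = Function.update η' (⟨j,hj⟩ : Fin L) (η ⟨j,hj⟩) l then (1:ℂ) else 0) = 1 := by
      apply Finset.prod_eq_one
      intro l hl
      rw [Function.update_of_ne (Finset.ne_of_mem_erase hl)]
      simp
    have h2 : (∏ l ∈ Finset.univ.erase (⟨k,hk⟩ : Fin L),
        (if Function.update η' (⟨j,hj⟩ : Fin L) (η ⟨j,hj⟩) l = η l then (1:ℂ) else 0))
        = ∏ l ∈ (Finset.univ.erase (⟨j,hj⟩ : Fin L)).erase (⟨k,hk⟩ : Fin L),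
            (if η' l = η l then (1:ℂ) else 0) := by
      rw [← Finset.mul_prod_erase _ _ (Finset.mem_erase.mpr ⟨hfne, Finset.mem_univ _⟩),
        Function.update_self, if_pos rfl, one_mul]
      rw [show ((Finset.univ.erase (⟨k,hk⟩ : Fin L)).erase (⟨j,hj⟩ : Fin L))
          = ((Finset.univ.erase (⟨j,hj⟩ : Fin L)).erase (⟨k,hk⟩ : Fin L)) from
          Finset.erase_right_comm]
      apply Finset.prod_congr rfl
      intro l hl
      rw [Function.update_of_ne (Finset.ne_of_mem_erase (Finset.mem_of_mem_erase
            (by rwa [Finset.erase_right_comm] at hl)))]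
    rw [Function.update_of_ne (Ne.symm hfne), h1, h2]
    ring
  · intro μ _ hμ
    obtain ⟨l, hl⟩ := Function.ne_iff.mp hμ
    by_cases hlj : l = (⟨j, hj⟩ : Fin L)
    · subst hlj
      rw [Function.update_self] at hl
      have hz : (∏ l ∈ Finset.univ.erase (⟨k,hk⟩ : Fin L),
          if μ l = η l then (1:ℂ) else 0) = 0 :=
        Finset.prod_eq_zero (Finset.mem_erase.mpr ⟨hfne, Finset.mem_univ _⟩) (if_neg hl)
      rw [site_apply B hk, hz]
      ring
    · rw [Function.update_of_ne hlj] at hl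
      have hz : (∏ l ∈ Finset.univ.erase (⟨j,hj⟩ : Fin L),
          if η' l = μ l then (1:ℂ) else 0) = 0 :=
        Finset.prod_eq_zero (Finset.mem_erase.mpr ⟨hlj, Finset.mem_univ _⟩)
          (if_neg (fun h => hl (Eq.symm h)))
      rw [site_apply A hj, hz]
      ring
  · intro h; exact absurd (Finset.mem_univ _) h

/-! ### Conjugation by `Vmat` -/

def Sconf {L : ℕ} (η : Conf L) : ℤ := ∑ j : Fin L, (((j : ℕ) : ℤ) + 1) * ((η j : ℕ) : ℤ)

lemma Vmat_diag (L : ℕ) (τ : ℂ) :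
    Vmat L τ = Matrix.diagonal (fun η : Conf L => τ ^ (-Sconf η)) := rfl

lemma Vmat_inv {L : ℕ} {τ : ℂ} (hτ : τ ≠ 0) :
    (Vmat L τ)⁻¹ = Matrix.diagonal (fun η : Conf L => (τ ^ (-Sconf η))⁻¹) := by
  apply Matrix.inv_eq_right_inv
  rw [Vmat_diag, Matrix.diagonal_mul_diagonal]
  have h : (fun η : Conf L => τ ^ (-Sconf η) * (τ ^ (-Sconf η))⁻¹) = fun _ => (1:ℂ) :=
    funext fun η => mul_inv_cancel₀ (zpow_ne_zero _ hτ)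
  rw [h, Matrix.diagonal_one]

lemma Vmat_mul_inv {L : ℕ} {τ : ℂ} (hτ : τ ≠ 0) : Vmat L τ * (Vmat L τ)⁻¹ = 1 := by
  rw [Vmat_inv hτ, Vmat_diag, Matrix.diagonal_mul_diagonal]
  have h : (fun η : Conf L => τ ^ (-Sconf η) * (τ ^ (-Sconf η))⁻¹) = fun _ => (1:ℂ) :=
    funext fun η => mul_inv_cancel₀ (zpow_ne_zero _ hτ)
  rw [h, Matrix.diagonal_one]

lemma conj_eq_smul {L : ℕ} {τ : ℂ} (hτ : τ ≠ 0) {M : Matrix (Conf L) (Conf L) ℂ} {c : ℂ}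
    (h : ∀ η' η, M η' η ≠ 0 → τ ^ (Sconf η - Sconf η') = c) :
    Vmat L τ * M * (Vmat L τ)⁻¹ = c • M := by
  rw [Vmat_inv hτ, Vmat_diag]
  ext η' η
  rw [Matrix.mul_diagonal, Matrix.diagonal_mul, Matrix.smul_apply, smul_eq_mul]
  by_cases h0 : M η' η = 0
  · rw [h0]; ring
  · have e : τ ^ (-Sconf η') * (τ ^ (-Sconf η))⁻¹ = τ ^ (Sconf η - Sconf η') := by
      rw [← _root_.zpow_neg, ← zpow_add₀ hτ]
      congr 1; ring
    rw [← h η' η h0]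
    linear_combination (M η' η) * e

lemma Sconf_sub_of_agree {L : ℕ} {η' η : Conf L} (s : Finset (Fin L))
    (h : ∀ l ∉ s, η' l = η l) :
    Sconf η - Sconf η' = ∑ l ∈ s, (((l : ℕ) : ℤ) + 1) * (((η l : ℕ) : ℤ) - ((η' l : ℕ) : ℤ)) := by
  unfold Sconf
  rw [← Finset.sum_sub_distrib]
  rw [← Finset.sum_subset (Finset.subset_univ s)
    (fun l _ hl => by rw [h l hl]; ring)]
  exact Finset.sum_congr rfl (fun l _ => by ring)

lemma ite_one_ne_zero {c : Prop} [Decidable c] (h : (if c then (1:ℂ) else 0) ≠ 0) : c := by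
  by_contra hc; exact h (if_neg hc)

lemma conj_site_single {L : ℕ} {τ : ℂ} (hτ : τ ≠ 0) (A : Matrix (Fin 2) (Fin 2) ℂ)
    {j : ℕ} (hj : j < L) (c : ℂ)
    (hc : ∀ a b : Fin 2, A a b ≠ 0 →
      τ ^ ((((j : ℕ) : ℤ) + 1) * (((b : ℕ) : ℤ) - ((a : ℕ) : ℤ))) = c) :
    Vmat L τ * site L A j * (Vmat L τ)⁻¹ = c • site L A j := by
  apply conj_eq_smul hτ
  intro η' η h0
  rw [site_apply A hj] at h0
  have hA := left_ne_zero_of_mul h0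
  have hE := right_ne_zero_of_mul h0
  rw [Finset.prod_ne_zero_iff] at hE
  have hagree : ∀ l ∉ ({(⟨j, hj⟩ : Fin L)} : Finset (Fin L)), η' l = η l := by
    intro l hl
    exact ite_one_ne_zero (hE l (Finset.mem_erase.mpr
      ⟨by simpa using hl, Finset.mem_univ _⟩))
  rw [Sconf_sub_of_agree _ hagree, Finset.sum_singleton]
  exact hc _ _ hA

lemma conj_site_pair {L : ℕ} {τ : ℂ} (hτ : τ ≠ 0) (A B : Matrix (Fin 2) (Fin 2) ℂ)
    {j k : ℕ} (hj : j < L) (hk : k < L) (hjk : j ≠ k) (c : ℂ)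
    (hc : ∀ a b a' b' : Fin 2, A a b ≠ 0 → B a' b' ≠ 0 →
      τ ^ ((((j : ℕ) : ℤ) + 1) * (((b : ℕ) : ℤ) - ((a : ℕ) : ℤ))
          + (((k : ℕ) : ℤ) + 1) * (((b' : ℕ) : ℤ) - ((a' : ℕ) : ℤ))) = c) :
    Vmat L τ * (site L A j * site L B k) * (Vmat L τ)⁻¹ = c • (site L A j * site L B k) := by
  have hfne : (⟨j, hj⟩ : Fin L) ≠ ⟨k, hk⟩ := fun h => hjk (congrArg Fin.val h)
  apply conj_eq_smul hτ
  intro η' η h0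
  rw [site_mul_site_apply A B hj hk hjk] at h0
  have hAB := left_ne_zero_of_mul h0
  have hA := left_ne_zero_of_mul hAB
  have hB := right_ne_zero_of_mul hAB
  have hE := right_ne_zero_of_mul h0
  rw [Finset.prod_ne_zero_iff] at hE
  have hagree : ∀ l ∉ ({(⟨j, hj⟩ : Fin L), (⟨k, hk⟩ : Fin L)} : Finset (Fin L)), η' l = η l := by
    intro l hl
    rw [Finset.mem_insert, Finset.mem_singleton] at hl
    push_neg at hl
    exact ite_one_ne_zero (hE l (Finset.mem_erase.mpr
      ⟨hl.2, Finset.mem_erase.mpr ⟨hl.1, Finset.mem_univ _⟩⟩))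
  rw [Sconf_sub_of_agree _ hagree, Finset.sum_pair hfne]
  exact hc _ _ _ _ hA hB

/-! ### 2×2 facts -/

lemma sigmaMinus_ne {a b : Fin 2} (h : sigmaMinus a b ≠ 0) : a = 1 ∧ b = 0 := by
  fin_cases a <;> fin_cases b <;> simp_all [sigmaMinus]

lemma sigmaPlus_ne {a b : Fin 2} (h : sigmaPlus a b ≠ 0) : a = 0 ∧ b = 1 := by
  fin_cases a <;> fin_cases b <;> simp_all [sigmaPlus]

lemma numOp_ne {a b : Fin 2} (h : numOp a b ≠ 0) : a = b := by
  fin_cases a <;> fin_cases b <;> simp_all [numOp]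

lemma oneSubNumOp_ne {a b : Fin 2} (h : (1 - numOp) a b ≠ 0) : a = b := by
  fin_cases a <;> fin_cases b <;>
    simp_all [numOp, Matrix.sub_apply, Matrix.one_apply]

lemma sigmaX_eq : sigmaX = sigmaPlus + sigmaMinus := by
  ext i j
  fin_cases i <;> fin_cases j <;>
    simp [sigmaX, sigmaPlus, sigmaMinus, Matrix.add_apply]

lemma sigmaZ_eq : sigmaZ = 1 - (2:ℂ) • numOp := by
  ext i j
  fin_cases i <;> fin_cases j <;>
    norm_num [sigmaZ, numOp, Matrix.sub_apply, Matrix.one_apply, Matrix.smul_apply]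

/-! ### The bulk identity -/

lemma scalar_bulk (τ : ℂ) (a b a' b' : Fin 2) :
    (-(1/2:ℂ)) * (sigmaX a b * sigmaX a' b' + sigmaY a b * sigmaY a' b'
        + (τ + τ⁻¹)/2 * (sigmaZ a b * sigmaZ a' b'))
    = -(sigmaMinus a b * sigmaPlus a' b' + sigmaMinus a' b' * sigmaPlus a b
        - τ⁻¹ * (((1 : Matrix (Fin 2) (Fin 2) ℂ) a b - numOp a b) * numOp a' b')
        - τ * (numOp a b * ((1 : Matrix (Fin 2) (Fin 2) ℂ) a' b' - numOp a' b')))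
      - (τ + τ⁻¹)/4 * ((if a = b then (1:ℂ) else 0) * (if a' = b' then (1:ℂ) else 0))
      - (τ⁻¹ - τ)/4 * (sigmaZ a b * (if a' = b' then (1:ℂ) else 0)
          - sigmaZ a' b' * (if a = b then (1:ℂ) else 0)) := by
  fin_cases a <;> fin_cases b <;> fin_cases a' <;> fin_cases b' <;>
    simp [sigmaX, sigmaY, sigmaZ, sigmaMinus, sigmaPlus, numOp, Matrix.sub_apply,
      Matrix.one_apply, Complex.I_mul_I] <;> ring

/-- The bulk term of the conjugated ASEP generator. -/
def bulkT (L : ℕ) (τ : ℂ) (j : ℕ) : Matrix (Conf L) (Conf L) ℂ :=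
  site L sigmaMinus j * site L sigmaPlus (j + 1)
    + site L sigmaMinus (j + 1) * site L sigmaPlus j
    - τ⁻¹ • (site L (1 - numOp) j * site L numOp (j + 1))
    - τ • (site L numOp j * site L (1 - numOp) (j + 1))

lemma bulk_key {L : ℕ} (τ : ℂ) {j : ℕ} (hj1 : j + 1 < L) :
    (-(1/2 : ℂ)) • (site L sigmaX j * site L sigmaX (j + 1)
        + site L sigmaY j * site L sigmaY (j + 1)
        + ((τ + τ⁻¹) / 2) • (site L sigmaZ j * site L sigmaZ (j + 1)))
    = -(bulkT L τ j) - ((τ + τ⁻¹)/4) • (1 : Matrix (Conf L) (Conf L) ℂ)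
      - ((τ⁻¹ - τ)/4) • (site L sigmaZ j - site L sigmaZ (j + 1)) := by
  have hj : j < L := Nat.lt_of_succ_lt hj1
  have hjk : j ≠ j + 1 := by omega
  have hfne : (⟨j, hj⟩ : Fin L) ≠ ⟨j + 1, hj1⟩ := fun h => hjk (congrArg Fin.val h)
  ext η' η
  have hXX := site_mul_site_apply sigmaX sigmaX hj hj1 hjk η' η
  have hYY := site_mul_site_apply sigmaY sigmaY hj hj1 hjk η' η
  have hZZ := site_mul_site_apply sigmaZ sigmaZ hj hj1 hjk η' η
  have hP1 := site_mul_site_apply sigmaMinus sigmaPlus hj hj1 hjk η' η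
  have hD1 := site_mul_site_apply (1 - numOp) numOp hj hj1 hjk η' η
  have hD2 := site_mul_site_apply numOp (1 - numOp) hj hj1 hjk η' η
  have hP2 : (site L sigmaMinus (j + 1) * site L sigmaPlus j) η' η
      = sigmaMinus (η' ⟨j + 1, hj1⟩) (η ⟨j + 1, hj1⟩) * sigmaPlus (η' ⟨j, hj⟩) (η ⟨j, hj⟩) *
        ∏ l ∈ (Finset.univ.erase (⟨j, hj⟩ : Fin L)).erase ⟨j + 1, hj1⟩,
          (if η' l = η l then (1 : ℂ) else 0) := by
    rw [site_mul_site_apply sigmaMinus sigmaPlus hj1 hj (by omega) η' η,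
      Finset.erase_right_comm]
  have hOne : (1 : Matrix (Conf L) (Conf L) ℂ) η' η
      = (if η' ⟨j, hj⟩ = η ⟨j, hj⟩ then (1:ℂ) else 0) *
          (if η' ⟨j + 1, hj1⟩ = η ⟨j + 1, hj1⟩ then (1:ℂ) else 0) *
          ∏ l ∈ (Finset.univ.erase (⟨j, hj⟩ : Fin L)).erase ⟨j + 1, hj1⟩,
            (if η' l = η l then (1 : ℂ) else 0) := by
    rw [Matrix.one_apply, delta_prod,
      ← Finset.mul_prod_erase _ _ (Finset.mem_univ (⟨j, hj⟩ : Fin L)),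
      ← Finset.mul_prod_erase _ _
        (Finset.mem_erase.mpr ⟨Ne.symm hfne, Finset.mem_univ (⟨j + 1, hj1⟩ : Fin L)⟩),
      ← mul_assoc]
  have hZj : site L sigmaZ j η' η
      = sigmaZ (η' ⟨j, hj⟩) (η ⟨j, hj⟩) *
          ((if η' ⟨j + 1, hj1⟩ = η ⟨j + 1, hj1⟩ then (1:ℂ) else 0) *
          ∏ l ∈ (Finset.univ.erase (⟨j, hj⟩ : Fin L)).erase ⟨j + 1, hj1⟩,
            (if η' l = η l then (1 : ℂ) else 0)) := by
    rw [site_apply sigmaZ hj, ← Finset.mul_prod_erase _ _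
      (Finset.mem_erase.mpr ⟨Ne.symm hfne, Finset.mem_univ (⟨j + 1, hj1⟩ : Fin L)⟩)]
  have hZj1 : site L sigmaZ (j + 1) η' η
      = sigmaZ (η' ⟨j + 1, hj1⟩) (η ⟨j + 1, hj1⟩) *
          ((if η' ⟨j, hj⟩ = η ⟨j, hj⟩ then (1:ℂ) else 0) *
          ∏ l ∈ (Finset.univ.erase (⟨j, hj⟩ : Fin L)).erase ⟨j + 1, hj1⟩,
            (if η' l = η l then (1 : ℂ) else 0)) := by
    rw [site_apply sigmaZ hj1, ← Finset.mul_prod_erase _ _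
      (Finset.mem_erase.mpr ⟨hfne, Finset.mem_univ (⟨j, hj⟩ : Fin L)⟩),
      Finset.erase_right_comm]
  simp only [bulkT, Matrix.smul_apply, Matrix.add_apply, Matrix.sub_apply, Matrix.neg_apply,
    smul_eq_mul, hXX, hYY, hZZ, hP1, hP2, hD1, hD2, hOne, hZj, hZj1]
  linear_combination (scalar_bulk τ (η' ⟨j, hj⟩) (η ⟨j, hj⟩) (η' ⟨j + 1, hj1⟩) (η ⟨j + 1, hj1⟩)) *
    (∏ l ∈ (Finset.univ.erase (⟨j, hj⟩ : Fin L)).erase ⟨j + 1, hj1⟩,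
      (if η' l = η l then (1 : ℂ) else 0))

end AsepAux

open AsepAux

/-- With `pq = 1`, `β = δ = 0`, `α = γτ²`, and `w = e^{iμζ}` satisfying the
matching condition `(γτ + ατ⁻¹)/2 = (τ − τ⁻¹)/(τ + w² − w⁻² − τ⁻¹)`, the Doikou XXZ
Hamiltonian `𝓗` (with `m = −1`, `τ = e^{−iμ}`) satisfies `2𝓗 = V 𝓛 V⁻¹ + C·I` for some
constant `C`. -/
theorem two_H_eq_VLVinv_add_const (L : ℕ) (hL : 1 ≤ L) (p q α β γ δ : ℝ)
    (hp : 0 < p) (hq : 0 < q)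
    (hα : 0 ≤ α) (hβ : 0 ≤ β) (hγ : 0 ≤ γ) (hδ : 0 ≤ δ)
    (hpq : p * q = 1) (hβ0 : β = 0) (hδ0 : δ = 0)
    (τ : ℂ) (hτ : τ = ((Real.sqrt (p / q) : ℝ) : ℂ))
    (hαγ : (α : ℂ) = (γ : ℂ) * τ ^ 2)
    (w : ℂ) (hw : w ≠ 0)
    (hden : τ + w ^ 2 - (w ^ 2)⁻¹ - τ⁻¹ ≠ 0)
    (hrel : ((γ : ℂ) * τ + (α : ℂ) * τ⁻¹) / 2 =
      (τ - τ⁻¹) / (τ + w ^ 2 - (w ^ 2)⁻¹ - τ⁻¹))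
    (g : ℂ) (hg : g = -(1 / 2 : ℂ) * (τ - τ⁻¹) / (τ + w ^ 2 - (w ^ 2)⁻¹ - τ⁻¹))
    (H : Matrix (Conf L) (Conf L) ℂ)
    (hH : H =
      (-(1 / 4 : ℂ)) •
        (∑ i ∈ Finset.range (L - 1),
          (site L sigmaX i * site L sigmaX (i + 1)
            + site L sigmaY i * site L sigmaY (i + 1)
            + ((τ + τ⁻¹) / 2) • (site L sigmaZ i * site L sigmaZ (i + 1))))
      - ((τ⁻¹ - τ) / 8) • (site L sigmaZ (L - 1) - site L sigmaZ 0)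
      - (((L : ℂ) + 1) * (τ + τ⁻¹) / 8) • (1 : Matrix (Conf L) (Conf L) ℂ)
      + g • (((τ⁻¹ - τ) / 2) • site L sigmaZ 0 + site L sigmaX 0)) :
    ∃ C : ℂ, (2 : ℂ) • H =
      Vmat L τ * asepGen L p q α β γ δ * (Vmat L τ)⁻¹
        + C • (1 : Matrix (Conf L) (Conf L) ℂ) := by
  classical
  have h0L : 0 < L := hL
  have hτ0 : τ ≠ 0 := by
    rw [hτ]
    exact_mod_cast ne_of_gt (Real.sqrt_pos.mpr (div_pos hp hq))
  have hττ : τ * τ⁻¹ = 1 := mul_inv_cancel₀ hτ0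
  have hα' : (α : ℂ) * τ⁻¹ = (γ : ℂ) * τ := by
    rw [hαγ]
    linear_combination (γ : ℂ) * τ * hττ
  have hgτ : (γ : ℂ) * τ = -(2 * g) := by
    have h2 : (γ:ℂ) * τ + (α:ℂ) * τ⁻¹ = -(4 * g) := by
      rw [hg]; linear_combination 2 * hrel
    linear_combination h2 / 2 - hα' / 2
  -- simplified ASEP generator
  have hasep : asepGen L p q α β γ δ =
      (-(1:ℂ)) • (∑ j ∈ Finset.range (L - 1),
        (τ⁻¹ • (site L sigmaMinus j * site L sigmaPlus (j + 1)
            - site L (1 - numOp) j * site L numOp (j + 1))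
          + τ • (site L sigmaMinus (j + 1) * site L sigmaPlus j
            - site L numOp j * site L (1 - numOp) (j + 1))))
      - (α : ℂ) • (site L sigmaMinus 0 - 1 + site L numOp 0)
      - (γ : ℂ) • (site L sigmaPlus 0 - site L numOp 0) := by
    simp only [asepGen, hβ0, hδ0, hpq, Real.sqrt_one, Complex.ofReal_zero,
      Complex.ofReal_one, zero_smul, sub_zero, ← hτ]
  -- conjugation of the bulk terms
  have hTj : ∀ j ∈ Finset.range (L - 1),
      Vmat L τ * (τ⁻¹ • (site L sigmaMinus j * site L sigmaPlus (j + 1)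
            - site L (1 - numOp) j * site L numOp (j + 1))
        + τ • (site L sigmaMinus (j + 1) * site L sigmaPlus j
            - site L numOp j * site L (1 - numOp) (j + 1))) * (Vmat L τ)⁻¹
        = bulkT L τ j := by
    intro j hjm
    have hj1 : j + 1 < L := by have := Finset.mem_range.mp hjm; omega
    have hj : j < L := by omega
    have hc1 : Vmat L τ * (site L sigmaMinus j * site L sigmaPlus (j + 1)) * (Vmat L τ)⁻¹
        = τ • (site L sigmaMinus j * site L sigmaPlus (j + 1)) := by
      apply conj_site_pair hτ0 _ _ hj hj1 (by omega)
      intro a b a' b' hA hB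
      obtain ⟨rfl, rfl⟩ := sigmaMinus_ne hA
      obtain ⟨rfl, rfl⟩ := sigmaPlus_ne hB
      have e : ((((j : ℕ) : ℤ) + 1) * ((((0 : Fin 2) : ℕ) : ℤ) - (((1 : Fin 2) : ℕ) : ℤ))
          + ((((j + 1 : ℕ) : ℕ) : ℤ) + 1) * ((((1 : Fin 2) : ℕ) : ℤ) - (((0 : Fin 2) : ℕ) : ℤ)))
          = 1 := by
        simp only [Fin.val_zero, Fin.val_one]
        push_cast
        ring
      rw [e, zpow_one]
    have hc2 : Vmat L τ * (site L sigmaMinus (j + 1) * site L sigmaPlus j) * (Vmat L τ)⁻¹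
        = τ⁻¹ • (site L sigmaMinus (j + 1) * site L sigmaPlus j) := by
      apply conj_site_pair hτ0 _ _ hj1 hj (by omega)
      intro a b a' b' hA hB
      obtain ⟨rfl, rfl⟩ := sigmaMinus_ne hA
      obtain ⟨rfl, rfl⟩ := sigmaPlus_ne hB
      have e : ((((j + 1 : ℕ) : ℕ) : ℤ) + 1) * ((((0 : Fin 2) : ℕ) : ℤ) - (((1 : Fin 2) : ℕ) : ℤ))
          + ((((j : ℕ) : ℕ) : ℤ) + 1) * ((((1 : Fin 2) : ℕ) : ℤ) - (((0 : Fin 2) : ℕ) : ℤ))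
          = -1 := by
        simp only [Fin.val_zero, Fin.val_one]
        push_cast
        ring
      rw [e, _root_.zpow_neg_one]
    have hc3 : Vmat L τ * (site L (1 - numOp) j * site L numOp (j + 1)) * (Vmat L τ)⁻¹
        = (1:ℂ) • (site L (1 - numOp) j * site L numOp (j + 1)) := by
      apply conj_site_pair hτ0 _ _ hj hj1 (by omega)
      intro a b a' b' hA hB
      obtain rfl := oneSubNumOp_ne hA
      obtain rfl := numOp_ne hB
      have e : ((((j : ℕ) : ℤ) + 1) * (((a : ℕ) : ℤ) - ((a : ℕ) : ℤ))
          + ((((j + 1 : ℕ) : ℕ) : ℤ) + 1) * (((a' : ℕ) : ℤ) - ((a' : ℕ) : ℤ))) = 0 := by ring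
      rw [e, zpow_zero]
    have hc4 : Vmat L τ * (site L numOp j * site L (1 - numOp) (j + 1)) * (Vmat L τ)⁻¹
        = (1:ℂ) • (site L numOp j * site L (1 - numOp) (j + 1)) := by
      apply conj_site_pair hτ0 _ _ hj hj1 (by omega)
      intro a b a' b' hA hB
      obtain rfl := numOp_ne hA
      obtain rfl := oneSubNumOp_ne hB
      have e : ((((j : ℕ) : ℤ) + 1) * (((a : ℕ) : ℤ) - ((a : ℕ) : ℤ))
          + ((((j + 1 : ℕ) : ℕ) : ℤ) + 1) * (((a' : ℕ) : ℤ) - ((a' : ℕ) : ℤ))) = 0 := by ring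
      rw [e, zpow_zero]
    rw [Matrix.mul_add, Matrix.add_mul, Matrix.mul_smul, Matrix.smul_mul,
      Matrix.mul_smul, Matrix.smul_mul, Matrix.mul_sub, Matrix.sub_mul,
      Matrix.mul_sub, Matrix.sub_mul, hc1, hc2, hc3, hc4]
    rw [smul_sub, smul_sub, smul_smul, smul_smul, smul_smul, smul_smul,
      inv_mul_cancel₀ hτ0, mul_inv_cancel₀ hτ0]
    simp only [bulkT, one_smul, mul_one]
    abel
  -- conjugation of the boundary terms
  have hcsm0 : Vmat L τ * site L sigmaMinus 0 * (Vmat L τ)⁻¹ = τ⁻¹ • site L sigmaMinus 0 := by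
    apply conj_site_single hτ0 _ h0L
    intro a b hA
    obtain ⟨rfl, rfl⟩ := sigmaMinus_ne hA
    have e : ((((0 : ℕ) : ℤ) + 1) * ((((0 : Fin 2) : ℕ) : ℤ) - (((1 : Fin 2) : ℕ) : ℤ))) = -1 := by
      simp only [Fin.val_zero, Fin.val_one] <;> push_cast <;> ring
    rw [e, _root_.zpow_neg_one]
  have hcsp0 : Vmat L τ * site L sigmaPlus 0 * (Vmat L τ)⁻¹ = τ • site L sigmaPlus 0 := by
    apply conj_site_single hτ0 _ h0L
    intro a b hA
    obtain ⟨rfl, rfl⟩ := sigmaPlus_ne hA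
    have e : ((((0 : ℕ) : ℤ) + 1) * ((((1 : Fin 2) : ℕ) : ℤ) - (((0 : Fin 2) : ℕ) : ℤ))) = 1 := by
      simp only [Fin.val_zero, Fin.val_one] <;> push_cast <;> ring
    rw [e, zpow_one]
  have hcn0 : Vmat L τ * site L numOp 0 * (Vmat L τ)⁻¹ = site L numOp 0 := by
    have h := conj_site_single hτ0 numOp h0L (1:ℂ) ?_
    · rw [h, one_smul]
    · intro a b hA
      obtain rfl := numOp_ne hA
      have e : ((((0 : ℕ) : ℤ) + 1) * (((a : ℕ) : ℤ) - ((a : ℕ) : ℤ))) = 0 := by ring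
      rw [e, zpow_zero]
  -- the conjugated generator
  have hconj : Vmat L τ * asepGen L p q α β γ δ * (Vmat L τ)⁻¹
      = (-(1:ℂ)) • (∑ j ∈ Finset.range (L - 1), bulkT L τ j)
        - (α : ℂ) • (τ⁻¹ • site L sigmaMinus 0 - 1 + site L numOp 0)
        - (γ : ℂ) • (τ • site L sigmaPlus 0 - site L numOp 0) := by
    rw [hasep]
    rw [Matrix.mul_sub, Matrix.mul_sub, Matrix.sub_mul, Matrix.sub_mul]
    rw [Matrix.mul_smul, Matrix.smul_mul, Finset.mul_sum, Finset.sum_mul]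
    rw [Finset.sum_congr rfl hTj]
    rw [Matrix.mul_smul, Matrix.smul_mul]
    rw [Matrix.mul_add, Matrix.mul_sub, Matrix.mul_one, Matrix.add_mul, Matrix.sub_mul,
      Vmat_mul_inv hτ0, hcsm0, hcn0]
    rw [Matrix.mul_smul, Matrix.smul_mul]
    rw [Matrix.mul_sub, Matrix.sub_mul, hcsp0, hcn0]
  -- bulk sum identity for the Hamiltonian
  have hbulk1 : (-(1/2:ℂ)) • (∑ i ∈ Finset.range (L - 1),
        (site L sigmaX i * site L sigmaX (i + 1)
          + site L sigmaY i * site L sigmaY (i + 1)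
          + ((τ + τ⁻¹) / 2) • (site L sigmaZ i * site L sigmaZ (i + 1))))
      = -(∑ j ∈ Finset.range (L - 1), bulkT L τ j)
        - (((L : ℂ) - 1) * ((τ + τ⁻¹)/4)) • (1 : Matrix (Conf L) (Conf L) ℂ)
        - ((τ⁻¹ - τ)/4) • (site L sigmaZ 0 - site L sigmaZ (L - 1)) := by
    rw [Finset.smul_sum]
    rw [Finset.sum_congr rfl (fun j hjm => bulk_key τ
      (show j + 1 < L by have := Finset.mem_range.mp hjm; omega))]
    rw [Finset.sum_sub_distrib, Finset.sum_sub_distrib, Finset.sum_neg_distrib,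
      Finset.sum_const, Finset.card_range, ← Finset.smul_sum,
      Finset.sum_range_sub' (fun i => site L sigmaZ i) (L - 1)]
    rw [← Nat.cast_smul_eq_nsmul ℂ, Nat.cast_sub hL, Nat.cast_one, smul_smul]
  have hA4 : (-(1/4:ℂ)) • (∑ i ∈ Finset.range (L - 1),
        (site L sigmaX i * site L sigmaX (i + 1)
          + site L sigmaY i * site L sigmaY (i + 1)
          + ((τ + τ⁻¹) / 2) • (site L sigmaZ i * site L sigmaZ (i + 1))))
      = (1/2:ℂ) • (-(∑ j ∈ Finset.range (L - 1), bulkT L τ j)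
        - (((L : ℂ) - 1) * ((τ + τ⁻¹)/4)) • (1 : Matrix (Conf L) (Conf L) ℂ)
        - ((τ⁻¹ - τ)/4) • (site L sigmaZ 0 - site L sigmaZ (L - 1))) := by
    rw [← hbulk1, smul_smul]
    norm_num
  -- site-0 decompositions
  have hsx0 : site L sigmaX 0 = site L sigmaPlus 0 + site L sigmaMinus 0 := by
    rw [sigmaX_eq, site_add _ _ h0L]
  have hsz0 : site L sigmaZ 0 = 1 - (2:ℂ) • site L numOp 0 := by
    rw [sigmaZ_eq, site_sub _ _ h0L, site_smul _ _ h0L, site_one h0L]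
  -- main computation
  refine ⟨g * (τ⁻¹ - τ) - (L : ℂ) * (τ + τ⁻¹) / 2 - (α : ℂ), ?_⟩
  rw [hconj, hH, hA4, hsz0, hsx0]
  match_scalars
  · ring
  · ring
  · linear_combination (-(τ⁻¹ - τ)) * hgτ + (γ : ℂ) * hττ + hαγ
  · ring
  · linear_combination hgτ
  · linear_combination hgτ + hα'
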